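/- arXiv:0907.0958 — 4 statements merged into one kernel-verified Lean document; each statement's English description precedes it below -/
import Mathlib

section
/- (McMullen's duality.) Let V be a linear subspace of ℝ^N and let V^⊥ be its orthogonal complement. Let L = V ∩ ℤ^N and L^⊥ = V^⊥ ∩ ℤ^N, and assume that the rank of L equals dim(V) (i.e. L spans V). Then L^⊥ has rank dim(V^⊥) = N − dim(V), and Vol(L^⊥) = Vol(L). -/
/-!
The integer points `Λ = V ∩ ℤᴺ` form a saturated sublattice: `ℤᴺ ⧸ Λ` is torsion-free, hence
free, so a basis `b` of `Λ` extends to a basis of `ℤᴺ`, i.e. to mutually inverse integer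
matrices `P`, `Q` such that the first rows of `P` are `b`. The last columns `c` of `Q` are
orthogonal to `b`, and an integer vector `x` orthogonal to `b` equals `Q (P x)`, an integer
combination of the `c`; so `c` is a basis of `L^⊥`. Jacobi's complementary minor identity then gives
`det (cᵀ c) = det (b bᵀ) · (det Q)² = det (b bᵀ)`.
-/

open Module Submodule Set Matrix

theorem Submodule.exists_basis_sum_inl_eq {R M ι : Type*} [Ring R] [AddCommGroup M] [Module R M]
    (P : Submodule R M) [Module.Free R (M ⧸ P)] (b : Basis ι R P) :
    ∃ B : Basis (ι ⊕ Free.ChooseBasisIndex R (M ⧸ P)) R M, ∀ i, B (.inl i) = b i := by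
  obtain ⟨s, hs⟩ := P.mkQ.exists_rightInverse_of_surjective P.range_mkQ
  obtain ⟨e, he, -⟩ :=
    (LinearMap.exact_subtype_mkQ P).splitSurjectiveEquiv P.injective_subtype ⟨s, hs⟩
  exact ⟨(b.prod (Free.chooseBasis R (M ⧸ P))).map e.symm,
    fun i => by simpa using (LinearMap.congr_fun he (b i)).symm⟩

section IntegerPoints

variable {n : Type*}

def castVec (K n : Type*) [Ring K] : (n → ℤ) →ₗ[ℤ] (n → K) :=
  (Int.castAddHom K).toIntLinearMap.compLeft n

@[simp]
theorem castVec_apply {K : Type*} [Ring K] (x : n → ℤ) (t : n) : castVec K n x t = x t := rfl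

theorem castVec_injective (K : Type*) [Ring K] [CharZero K] : Function.Injective (castVec K n) :=
  Int.cast_injective.comp_left

def integerPoints {K : Type*} [Ring K] (V : Submodule K (n → K)) : Submodule ℤ (n → ℤ) :=
  (V.restrictScalars ℤ).comap (castVec K n)

theorem mem_integerPoints {K : Type*} [Ring K] {V : Submodule K (n → K)} {x : n → ℤ} :
    x ∈ integerPoints V ↔ castVec K n x ∈ V := Iff.rfl

instance {K : Type*} [Field K] [CharZero K] (V : Submodule K (n → K)) :
    IsTorsionFree ℤ ((n → ℤ) ⧸ integerPoints V) := by
  refine .of_smul_eq_zero fun k x hkx => or_iff_not_imp_left.2 fun hk => ?_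
  obtain ⟨x, rfl⟩ := Submodule.Quotient.mk_surjective _ x
  rw [← Submodule.Quotient.mk_smul, Submodule.Quotient.mk_eq_zero, mem_integerPoints, map_zsmul,
    ← Int.cast_smul_eq_zsmul K] at hkx
  rw [Submodule.Quotient.mk_eq_zero, mem_integerPoints]
  simpa [smul_smul, hk] using V.smul_mem (k : K)⁻¹ hkx

theorem integerPoints_eq_span {K ι : Type*} [Field K] [CharZero K] [Fintype ι]
    {V : Submodule K (n → K)} {b : ι → n → ℤ}
    (h : ∀ x : n → K, (x ∈ V ∧ ∀ t, ∃ k : ℤ, x t = k) ↔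
      ∃ c : ι → ℤ, x = ∑ i, (c i : K) • castVec K n (b i)) :
    integerPoints V = span ℤ (range b) := by
  ext x
  have hcast (c : ι → ℤ) : castVec K n (∑ i, c i • b i) = ∑ i, (c i : K) • castVec K n (b i) := by
    simp only [map_sum, map_zsmul, Int.cast_smul_eq_zsmul]
  rw [mem_integerPoints, mem_span_range_iff_exists_fun]
  refine (and_iff_left fun t => ⟨x t, rfl⟩).symm.trans ((h _).trans (exists_congr fun c => ?_))
  rw [← hcast, (castVec_injective K).eq_iff, eq_comm]

end IntegerPoints

namespace Matrix

section Blocks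

variable {R ι κ n : Type*} [Fintype n] [DecidableEq ι] [DecidableEq κ]
  {P : Matrix (ι ⊕ κ) n R} {Q : Matrix n (ι ⊕ κ) R}

theorem toRows_mul_toCols_of_mul_eq_one [Semiring R] (h : P * Q = 1) :
    P.toRows₁ * Q.toCols₁ = 1 ∧ P.toRows₁ * Q.toCols₂ = 0 ∧
      P.toRows₂ * Q.toCols₁ = 0 ∧ P.toRows₂ * Q.toCols₂ = 1 := by
  rwa [← fromRows_toRows P, ← fromCols_toCols Q, fromRows_mul_fromCols, ← fromBlocks_one,
    fromBlocks_inj] at h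

theorem toRows₁_mulVec_eq_zero_iff [Semiring R] [Fintype ι] [Fintype κ] [DecidableEq n]
    (hPQ : P * Q = 1) (hQP : Q * P = 1) (x : n → R) :
    P.toRows₁ *ᵥ x = 0 ↔ ∃ a, x = Q.toCols₂ *ᵥ a := by
  constructor
  · intro hx
    refine ⟨P.toRows₂ *ᵥ x, ?_⟩
    conv_lhs => rw [← one_mulVec x, ← hQP, ← mulVec_mulVec, ← fromRows_toRows P,
      ← fromCols_toCols Q, fromRows_mulVec, fromCols_mulVec_sumElim]
    rw [hx, mulVec_zero, zero_add]
  · rintro ⟨a, rfl⟩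
    rw [mulVec_mulVec, (toRows_mul_toCols_of_mul_eq_one hPQ).2.1, zero_mulVec]

theorem linearIndependent_col_toCols₂ [CommSemiring R] [Fintype κ] (h : P * Q = 1) :
    LinearIndependent R Q.toCols₂.col := by
  rw [← mulVec_injective_iff]
  refine Function.LeftInverse.injective (g := P.toRows₂.mulVec) fun a => ?_
  rw [mulVec_mulVec, (toRows_mul_toCols_of_mul_eq_one h).2.2.2, one_mulVec]

end Blocks

variable {R ι κ n : Type*} [CommRing R] [Fintype ι] [Fintype κ] [DecidableEq ι] [DecidableEq κ]

theorem det_gram_toCols₂ (U W : Matrix (ι ⊕ κ) (ι ⊕ κ) R) (h : U * W = 1) :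
    (W.toCols₂ᵀ * W.toCols₂).det = (U.toRows₁ * U.toRows₁ᵀ).det * W.det ^ 2 := by
  obtain ⟨hBA, hBC, -, hB'C⟩ := toRows_mul_toCols_of_mul_eq_one h
  -- both `U * M` and `Wᵀ * M` are block triangular
  set M := fromCols U.toRows₁ᵀ W.toCols₂
  have hUM : U * M = fromBlocks (U.toRows₁ * U.toRows₁ᵀ) 0 (U.toRows₂ * U.toRows₁ᵀ) 1 := by
    rw [← fromRows_toRows U, fromRows_mul_fromCols, hBC, hB'C]; rfl
  have hWM : Wᵀ * M = fromBlocks 1 (W.toCols₁ᵀ * W.toCols₂) 0 (W.toCols₂ᵀ * W.toCols₂) := by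
    rw [← fromCols_toCols W, transpose_fromCols, fromRows_mul_fromCols, ← transpose_mul,
      ← transpose_mul, hBA, hBC, transpose_one, transpose_zero]
    rfl
  have hdetU : U.det * M.det = (U.toRows₁ * U.toRows₁ᵀ).det := by
    rw [← det_mul, hUM, det_fromBlocks_zero₁₂, det_one, mul_one]
  have hdetW : W.det * M.det = (W.toCols₂ᵀ * W.toCols₂).det := by
    rw [← det_transpose W, ← det_mul, hWM, det_fromBlocks_zero₂₁, det_one, one_mul]
  have hUW : U.det * W.det = 1 := by rw [← det_mul, h, det_one]
  rw [← hdetU, ← hdetW]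
  linear_combination (- W.det * M.det) * hUW

theorem det_gram_toCols₂_of_int [Fintype n] {P : Matrix (ι ⊕ κ) n ℤ} {Q : Matrix n (ι ⊕ κ) ℤ}
    (h : P * Q = 1) (e : n ≃ ι ⊕ κ) :
    (Q.toCols₂ᵀ * Q.toCols₂).det = (P.toRows₁ * P.toRows₁ᵀ).det := by
  set U := P.submatrix id e.symm
  set W := Q.submatrix e.symm id
  have hUW : U * W = 1 := by rw [submatrix_mul_equiv, h, submatrix_id_id]
  have hW : IsUnit W.det := .of_mul_eq_one_right U.det (by rw [← det_mul, hUW, det_one])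
  have hgram := det_gram_toCols₂ U W hUW
  rwa [Int.isUnit_sq hW, mul_one, show W.toCols₂ = Q.toCols₂.submatrix e.symm id from rfl,
    show U.toRows₁ = P.toRows₁.submatrix id e.symm from rfl, transpose_submatrix,
    transpose_submatrix, submatrix_mul_equiv, submatrix_mul_equiv, submatrix_id_id,
    submatrix_id_id] at hgram

end Matrix

theorem exists_unimodular_extension {ι κ n : Type*} [Fintype ι] [Fintype κ] [Fintype n]
    [DecidableEq ι] [DecidableEq κ] [DecidableEq n] (b : ι → n → ℤ) (hb : LinearIndependent ℤ b)
    [IsTorsionFree ℤ ((n → ℤ) ⧸ span ℤ (range b))]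
    (hcard : Fintype.card ι + Fintype.card κ = Fintype.card n) :
    ∃ (P : Matrix (ι ⊕ κ) n ℤ) (Q : Matrix n (ι ⊕ κ) ℤ),
      P.toRows₁ = b ∧ P * Q = 1 ∧ Q * P = 1 := by
  obtain ⟨B, hB⟩ := (span ℤ (range b)).exists_basis_sum_inl_eq (Basis.span hb)
  have hκ : Fintype.card (Free.ChooseBasisIndex ℤ ((n → ℤ) ⧸ span ℤ (range b))) =
      Fintype.card κ := by
    have := (finrank_eq_card_basis B).symm.trans (finrank_fintype_fun_eq_card ℤ)
    rw [Fintype.card_sum] at this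
    omega
  set B' := B.reindex (Equiv.sumCongr (Equiv.refl ι) (Fintype.equivOfCardEq hκ))
  refine ⟨((Pi.basisFun ℤ n).toMatrix B')ᵀ, (B'.toMatrix (Pi.basisFun ℤ n))ᵀ, ?_, ?_, ?_⟩
  · ext i t
    simp [Basis.toMatrix_apply, B', hB, Basis.span_apply]
  · rw [← transpose_mul, Basis.toMatrix_mul_toMatrix_flip, transpose_one]
  · rw [← transpose_mul, Basis.toMatrix_mul_toMatrix_flip, transpose_one]

theorem orthogonal_integral_iff_exists_sum {K ι κ n : Type*} [Field K] [CharZero K]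
    [Fintype ι] [Fintype κ] [Fintype n] [DecidableEq ι] [DecidableEq κ] [DecidableEq n]
    {P : Matrix (ι ⊕ κ) n ℤ} {Q : Matrix n (ι ⊕ κ) ℤ} (hPQ : P * Q = 1) (hQP : Q * P = 1)
    (x : n → K) :
    ((∀ y ∈ span K (range fun i => castVec K n (P.toRows₁ i)), ∑ t, x t * y t = 0) ∧
        ∀ t, ∃ k : ℤ, x t = k) ↔
      ∃ a : κ → ℤ, x = ∑ j, (a j : K) • castVec K n (Q.toCols₂ᵀ j) := by
  have hcast (a : κ → ℤ) :
      castVec K n (Q.toCols₂ *ᵥ a) = ∑ j, (a j : K) • castVec K n (Q.toCols₂ᵀ j) := by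
    ext t
    simp [mulVec, dotProduct, Finset.sum_apply, mul_comm]
  constructor
  · rintro ⟨horth, hint⟩
    choose x' hx' using hint
    obtain rfl : x = castVec K n x' := funext hx'
    have hPx : P.toRows₁ *ᵥ x' = 0 := funext fun i => Int.cast_injective (α := K) <| by
      simpa [mulVec, dotProduct, mul_comm] using horth _ (subset_span ⟨i, rfl⟩)
    obtain ⟨a, rfl⟩ := (toRows₁_mulVec_eq_zero_iff hPQ hQP x').1 hPx
    exact ⟨a, hcast a⟩
  · rintro ⟨a, rfl⟩
    have hPQa : P.toRows₁ *ᵥ (Q.toCols₂ *ᵥ a) = 0 :=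
      (toRows₁_mulVec_eq_zero_iff hPQ hQP _).2 ⟨a, rfl⟩
    rw [← hcast]
    refine ⟨fun y hy => ?_, fun t => ⟨(Q.toCols₂ *ᵥ a) t, rfl⟩⟩
    change castVec K n (Q.toCols₂ *ᵥ a) ⬝ᵥ y = 0
    induction hy using span_induction with
    | mem y hy =>
      obtain ⟨i, rfl⟩ := hy
      simpa [dotProduct, mulVec, mul_comm] using congrArg (Int.cast : ℤ → K) (congrFun hPQa i)
    | zero => exact dotProduct_zero _
    | add y z _ _ hy hz => rw [dotProduct_add, hy, hz, add_zero]
    | smul r y _ hy => rw [dotProduct_smul, hy, smul_zero]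

theorem det_gram_intCast {S ι n : Type*} [CommRing S] [Fintype ι] [DecidableEq ι] [Fintype n]
    (v : Matrix ι n ℤ) :
    (of fun i j => ∑ t, castVec S n (v i) t * castVec S n (v j) t).det = ((v * vᵀ).det : S) := by
  rw [← eq_intCast (Int.castRingHom S), RingHom.map_det]
  congr 1
  ext i j
  simp [mul_apply]

/-- McMullen's duality: Let `V` be a linear subspace of `ℝ^N` and `V^⊥` its
orthogonal complement, and let `L = V ∩ ℤ^N`, `L^⊥ = V^⊥ ∩ ℤ^N`.  If `L` spans `V`
(i.e. its rank `m` equals `dim V`, witnessed by a ℤ-basis `b` of `L` consisting of `m`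
linearly independent vectors), then `L^⊥` has rank `N − m = dim V^⊥`, i.e. it has a
ℤ-basis of `N − m` linearly independent vectors `c`, and `Vol(L^⊥) = Vol(L)`, where the
covolume is the square root of the Gram determinant of a basis. -/
theorem stmt_2 (N : ℕ) (V : Submodule ℝ (Fin N → ℝ)) (m : ℕ)
    (hm : m = Module.finrank ℝ V)
    (L Lp : Set (Fin N → ℝ))
    (hL : L = {x | x ∈ V ∧ ∀ j, ∃ k : ℤ, x j = (k : ℝ)})
    (hLp : Lp = {x | (∀ y ∈ V, ∑ j, x j * y j = 0) ∧ ∀ j, ∃ k : ℤ, x j = (k : ℝ)})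
    (b : Fin m → (Fin N → ℝ))
    (hb_ind : LinearIndependent ℝ b)
    (hb_span : ∀ x, x ∈ L ↔ ∃ c : Fin m → ℤ, x = ∑ i, (c i : ℝ) • b i) :
    ∃ c : Fin (N - m) → (Fin N → ℝ),
      LinearIndependent ℝ c ∧
      (∀ x, x ∈ Lp ↔ ∃ a : Fin (N - m) → ℤ, x = ∑ i, (a i : ℝ) • c i) ∧
      Real.sqrt (Matrix.det (Matrix.of fun i j => ∑ t, c i t * c j t)) =
        Real.sqrt (Matrix.det (Matrix.of fun i j => ∑ t, b i t * b j t)) := by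
  subst hL hLp
  have hmN : m ≤ N := by simpa using hb_ind.fintype_card_le_finrank
  have hbL (i : Fin m) : b i ∈ V ∧ ∀ t, ∃ k : ℤ, b i t = k :=
    (hb_span _).2 ⟨Pi.single i 1, by simp [Pi.single_apply]⟩
  choose hbV b' hb' using hbL
  obtain rfl : b = fun i => castVec ℝ _ (b' i) := funext fun i => funext (hb' i)
  have hV : V = span ℝ (range fun i => castVec ℝ _ (b' i)) :=
    (eq_of_le_of_finrank_le (span_le.2 (range_subset_iff.2 hbV))
      (by rw [finrank_span_eq_card hb_ind, Fintype.card_fin, hm])).symm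
  have : IsTorsionFree ℤ ((Fin N → ℤ) ⧸ span ℤ (range b')) :=
    integerPoints_eq_span hb_span ▸ inferInstance
  obtain ⟨P, Q, rfl, hPQ, hQP⟩ := exists_unimodular_extension (κ := Fin (N - m)) b'
    (hb_ind.restrict_scalars' ℤ).of_comp (by simp only [Fintype.card_fin]; omega)
  refine ⟨fun j => castVec ℝ _ (Q.toCols₂ᵀ j), ?_, fun x => ?_, ?_⟩
  · exact linearIndependent_col_toCols₂ (P := P.map (Int.castRingHom ℝ))
      (by rw [← Matrix.map_mul, hPQ, Matrix.map_one _ (map_zero _) (map_one _)])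
  · rw [hV]
    exact orthogonal_integral_iff_exists_sum hPQ hQP x
  · beta_reduce
    rw [det_gram_intCast, det_gram_intCast, transpose_transpose,
      det_gram_toCols₂_of_int hPQ ((finCongr (by omega)).trans finSumFinEquiv.symm)]
end

section
/- Let d ≥ 3 be an integer and let Σ_d = {x ∈ [0,1]^d : Σ_{i=1}^d x_i = 1}. The function φ_v(x) = Σ_{i=1}^d ((1 − x_i) ln(1 − x_i) − x_i ln(x_i)) (with the convention 0·ln 0 = 0) attains its maximum on Σ_d at the unique point (1/d, 1/d, …, 1/d), and the maximum value is (d−1) ln(d−1) − (d−2) ln d = ln((d−1)^{d−1}/d^{d−2}). -/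
/-!
Write `φ_v x = ∑ i, g (x i)` with `g t = (1 - t) ln (1 - t) - t ln t`. Since
`g' t = -ln (t (1 - t)) - 2` is decreasing on `(0, 1/2)`, `g` is strictly concave on `[0, 1/2]`;
moreover `g (1 - t) = -g t`. If every coordinate is at most `1/2`, Jensen's inequality gives
`φ_v x < d g (1/d)` away from the centre. Otherwise one coordinate is `1 - r` with `r < 1/2`, and
Jensen on the remaining `d - 1` coordinates gives `φ_v x ≤ G r := (d - 1) g (r / (d - 1)) - g r`.
As `g'` is decreasing, `G` is monotone, so `φ_v x ≤ G (1/2)`, the value of `φ_v` at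
`(1/2, 1/(2(d-1)), …, 1/(2(d-1)))`. All coordinates of this point are at most `1/2`, and for
`d ≥ 3` it is not the centre, so the first case applies to it.
-/

open Real Set Finset

/-- The summand `g` of `φ_v`. -/
noncomputable def negMulLogDiff (t : ℝ) : ℝ := negMulLog t - negMulLog (1 - t)

lemma negMulLogDiff_one_sub (t : ℝ) : negMulLogDiff (1 - t) = -negMulLogDiff t := by
  simp [negMulLogDiff]

lemma negMulLogDiff_half : negMulLogDiff (1 / 2) = 0 := by
  norm_num [negMulLogDiff]

lemma continuous_negMulLogDiff : Continuous negMulLogDiff := by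
  unfold negMulLogDiff; fun_prop

lemma hasDerivAt_negMulLogDiff {t : ℝ} (h0 : 0 < t) (h1 : t < 1) :
    HasDerivAt negMulLogDiff (-log (t * (1 - t)) - 2) t := by
  have h1' : 1 - t ≠ 0 := by linarith
  have hsub : HasDerivAt (fun s ↦ 1 - s) (-1) t := by
    simpa using (hasDerivAt_id t).const_sub 1
  refine ((hasDerivAt_negMulLog h0.ne').sub
    ((hasDerivAt_negMulLog h1').comp t hsub)).congr_deriv ?_
  rw [log_mul h0.ne' h1']
  ring

lemma differentiableOn_negMulLogDiff : DifferentiableOn ℝ negMulLogDiff (Ioo 0 1) :=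
  fun _ ht ↦ (hasDerivAt_negMulLogDiff ht.1 ht.2).differentiableAt.differentiableWithinAt

lemma strictAntiOn_deriv_negMulLogDiff : StrictAntiOn (deriv negMulLogDiff) (Ioo 0 (1 / 2)) := by
  intro s ⟨hs0, hs⟩ t ⟨ht0, ht⟩ hst
  rw [(hasDerivAt_negMulLogDiff hs0 (by linarith)).deriv,
    (hasDerivAt_negMulLogDiff ht0 (by linarith)).deriv]
  have : log (s * (1 - s)) < log (t * (1 - t)) :=
    log_lt_log (by nlinarith) (by nlinarith)
  linarith

lemma strictConcaveOn_negMulLogDiff : StrictConcaveOn ℝ (Icc 0 (1 / 2)) negMulLogDiff :=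
  StrictAntiOn.strictConcaveOn_of_deriv (convex_Icc _ _) continuous_negMulLogDiff.continuousOn
    (by rw [interior_Icc]; exact strictAntiOn_deriv_negMulLogDiff)

lemma ConcaveOn.sum_le_card_mul {s : Set ℝ} {f : ℝ → ℝ} (hf : ConcaveOn ℝ s f)
    {ι : Type*} {t : Finset ι} {p : ι → ℝ} {c : ℝ} (hp : ∀ i ∈ t, p i ∈ s)
    (hsum : ∑ i ∈ t, p i = #t * c) : ∑ i ∈ t, f (p i) ≤ #t * f c := by
  obtain rfl | ht := t.eq_empty_or_nonempty
  · simp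
  have hn : (0 : ℝ) < #t := by exact_mod_cast ht.card_pos
  have hmean : ∑ i ∈ t, (#t : ℝ)⁻¹ • p i = c := by
    rw [← smul_sum, hsum, smul_eq_mul, inv_mul_cancel_left₀ hn.ne']
  have := hf.le_map_sum (w := fun _ ↦ (#t : ℝ)⁻¹) (fun _ _ ↦ by positivity)
    (by simp [hn.ne']) hp
  rw [hmean, ← smul_sum, smul_eq_mul] at this
  exact (inv_mul_le_iff₀ hn).1 this

lemma StrictConcaveOn.sum_lt_card_mul {s : Set ℝ} {f : ℝ → ℝ} (hf : StrictConcaveOn ℝ s f)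
    {ι : Type*} {t : Finset ι} {p : ι → ℝ} {c : ℝ} (hp : ∀ i ∈ t, p i ∈ s)
    (hsum : ∑ i ∈ t, p i = #t * c) (hne : ∃ j ∈ t, p j ≠ c) :
    ∑ i ∈ t, f (p i) < #t * f c := by
  obtain ⟨j, hj, hjc⟩ := hne
  have hn : (0 : ℝ) < #t := by exact_mod_cast card_pos.2 ⟨j, hj⟩
  have hmean : ∑ i ∈ t, (#t : ℝ)⁻¹ • p i = c := by
    rw [← smul_sum, hsum, smul_eq_mul, inv_mul_cancel_left₀ hn.ne']
  have hnonconst : ∃ j ∈ t, ∃ k ∈ t, p j ≠ p k := by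
    by_contra! hconst
    refine hjc (mul_left_cancel₀ hn.ne' ?_)
    rw [← hsum, sum_congr rfl fun i hi ↦ hconst i hi j hj, sum_const, nsmul_eq_mul]
  have := hf.lt_map_sum (w := fun _ ↦ (#t : ℝ)⁻¹) (fun _ _ ↦ by positivity)
    (by simp [hn.ne']) hp hnonconst
  rw [hmean, ← smul_sum, smul_eq_mul] at this
  exact (inv_mul_lt_iff₀ hn).1 this

lemma monotoneOn_mul_comp_div_sub {f : ℝ → ℝ} {a e : ℝ} (he : 1 ≤ e)
    (hf : ContinuousOn f (Icc 0 a)) (hdf : DifferentiableOn ℝ f (Ioo 0 a))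
    (hf' : AntitoneOn (deriv f) (Ioo 0 a)) :
    MonotoneOn (fun r ↦ e * f (r / e) - f r) (Icc 0 a) := by
  have he0 : 0 < e := by linarith
  have hdiv : ∀ r ∈ Ioo 0 a, r / e ∈ Ioo 0 a ∧ r / e ≤ r := fun r ⟨hr0, hra⟩ ↦
    ⟨⟨by positivity, (div_le_self hr0.le he).trans_lt hra⟩, div_le_self hr0.le he⟩
  have hderiv : ∀ r ∈ Ioo 0 a,
      HasDerivAt (fun r ↦ e * f (r / e) - f r) (deriv f (r / e) - deriv f r) r := by
    intro r hr
    have hfr := (hdf.differentiableAt (Ioo_mem_nhds hr.1 hr.2)).hasDerivAt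
    have hfre := (hdf.differentiableAt
      (Ioo_mem_nhds (hdiv r hr).1.1 (hdiv r hr).1.2)).hasDerivAt
    exact (((hfre.comp r ((hasDerivAt_id r).div_const e)).const_mul e).sub hfr).congr_deriv
      (by field_simp)
  have hcont : ContinuousOn (fun r ↦ e * f (r / e) - f r) (Icc 0 a) := by
    refine (continuousOn_const.mul (hf.comp (continuousOn_id.div_const e) ?_)).sub hf
    intro r ⟨hr0, hra⟩
    exact ⟨by positivity, (div_le_self hr0 he).trans hra⟩
  refine monotoneOn_of_deriv_nonneg (convex_Icc 0 a) hcont ?_ ?_ <;> rw [interior_Icc]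
  · exact fun r hr ↦ (hderiv r hr).differentiableAt.differentiableWithinAt
  · intro r hr
    rw [(hderiv r hr).deriv, sub_nonneg]
    exact hf' (hdiv r hr).1 hr (hdiv r hr).2

section Simplex

variable {ι : Type*} [Fintype ι] {x : ι → ℝ}

lemma sum_negMulLogDiff_lt_of_le_half (hx : ∀ i, x i ∈ Set.Icc 0 (1 / 2))
    (hsum : ∑ i, x i = 1) (hne : ∃ j, x j ≠ 1 / Fintype.card ι) :
    ∑ i, negMulLogDiff (x i) < Fintype.card ι * negMulLogDiff (1 / Fintype.card ι) := by
  obtain ⟨j, hj⟩ := hne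
  have hcard : (Fintype.card ι : ℝ) ≠ 0 := by
    exact_mod_cast (Fintype.card_pos_iff.2 ⟨j⟩).ne'
  simpa using strictConcaveOn_negMulLogDiff.sum_lt_card_mul (t := univ) (fun i _ ↦ hx i)
    (by rw [card_univ, hsum, mul_one_div_cancel hcard]) ⟨j, mem_univ j, hj⟩

lemma sub_one_mul_negMulLogDiff_half_div_lt {n : ℕ} (hn : 3 ≤ n) :
    ((n : ℝ) - 1) * negMulLogDiff (1 / 2 / ((n : ℝ) - 1)) < n * negMulLogDiff (1 / n) := by
  set e : ℝ := n - 1 with he_def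
  have he : 2 ≤ e := by
    rw [he_def, le_sub_iff_add_le]; exact_mod_cast hn
  set k : Fin n := ⟨0, by omega⟩
  set y : Fin n → ℝ := Function.update (fun _ ↦ 1 / 2 / e) k (1 / 2)
  have hyk : y k = 1 / 2 := Function.update_self ..
  have hy_sum : ∀ g : ℝ → ℝ, ∑ i, g (y i) = g (1 / 2) + e * g (1 / 2 / e) := by
    intro g
    have hrest : ∀ i ∈ univ.erase k, g (y i) = g (1 / 2 / e) := fun i hi ↦ by
      simp [y, ne_of_mem_erase hi]
    rw [← add_sum_erase _ _ (mem_univ k), sum_congr rfl hrest, sum_const, nsmul_eq_mul,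
      card_erase_of_mem (mem_univ k), card_univ, Fintype.card_fin, Nat.cast_sub (by omega),
      Nat.cast_one, hyk]
  have hy_mem : ∀ i, y i ∈ Set.Icc 0 (1 / 2) := by
    intro i
    obtain rfl | hi := eq_or_ne i k
    · rw [hyk]; norm_num
    · simp only [y, Function.update_of_ne hi]
      exact ⟨by positivity, div_le_self (by norm_num) (by linarith)⟩
  have hy_ne : y k ≠ 1 / Fintype.card (Fin n) := by
    rw [hyk, Fintype.card_fin, Ne, one_div, one_div, inv_inj]
    exact_mod_cast (by omega : 2 ≠ n)
  have hy_total : ∑ i, y i = 1 := by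
    refine (hy_sum id).trans ?_
    rw [id, id, mul_div_cancel₀ _ (by linarith : e ≠ 0)]
    norm_num
  have hy := sum_negMulLogDiff_lt_of_le_half hy_mem hy_total ⟨k, hy_ne⟩
  rwa [hy_sum, negMulLogDiff_half, zero_add, Fintype.card_fin] at hy

lemma sum_negMulLogDiff_lt_of_half_lt [DecidableEq ι] (hcard : 3 ≤ Fintype.card ι)
    (hx : ∀ i, x i ∈ Set.Icc 0 1) (hsum : ∑ i, x i = 1) {k : ι} (hk : 1 / 2 < x k) :
    ∑ i, negMulLogDiff (x i) < Fintype.card ι * negMulLogDiff (1 / Fintype.card ι) := by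
  set e : ℝ := Fintype.card ι - 1 with he_def
  have he : 2 ≤ e := by
    rw [he_def, le_sub_iff_add_le]; exact_mod_cast hcard
  have hcard_erase : (#(univ.erase k) : ℝ) = e := by
    rw [card_erase_of_mem (mem_univ k), card_univ, Nat.cast_sub (by omega), Nat.cast_one]
  set r := 1 - x k with hr_def
  have hrest : ∑ i ∈ univ.erase k, x i = r := by
    rw [hr_def, ← hsum, ← add_sum_erase _ _ (mem_univ k), add_sub_cancel_left]
  have hr : r ∈ Set.Icc 0 (1 / 2) := ⟨by linarith [(hx k).2], by linarith⟩
  have hle : ∑ i, negMulLogDiff (x i) ≤ e * negMulLogDiff (r / e) - negMulLogDiff r := by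
    have hconc := strictConcaveOn_negMulLogDiff.concaveOn.sum_le_card_mul (c := r / e)
      (t := univ.erase k) (p := x)
      (fun i hi ↦ ⟨(hx i).1, (hrest ▸ single_le_sum (fun j _ ↦ (hx j).1) hi).trans hr.2⟩)
      (by rw [hrest, hcard_erase]; field_simp)
    have hxk : negMulLogDiff (x k) = -negMulLogDiff r := by
      rw [hr_def, ← negMulLogDiff_one_sub, sub_sub_cancel]
    rw [← add_sum_erase _ _ (mem_univ k), hxk]
    rw [hcard_erase] at hconc
    linarith
  have hmono := monotoneOn_mul_comp_div_sub (by linarith : 1 ≤ e)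
    continuous_negMulLogDiff.continuousOn
    (differentiableOn_negMulLogDiff.mono (Ioo_subset_Ioo_right (by norm_num)))
    strictAntiOn_deriv_negMulLogDiff.antitoneOn hr ⟨by norm_num, le_rfl⟩ hr.2
  have hpoint := sub_one_mul_negMulLogDiff_half_div_lt hcard
  simp only at hmono
  rw [negMulLogDiff_half] at hmono
  linarith

lemma sum_negMulLogDiff_lt_of_ne (hcard : 3 ≤ Fintype.card ι) (hx : ∀ i, x i ∈ Set.Icc 0 1)
    (hsum : ∑ i, x i = 1) (hne : x ≠ fun _ ↦ 1 / (Fintype.card ι : ℝ)) :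
    ∑ i, negMulLogDiff (x i) < Fintype.card ι * negMulLogDiff (1 / Fintype.card ι) := by
  classical
  by_cases hhalf : ∀ i, x i ≤ 1 / 2
  · exact sum_negMulLogDiff_lt_of_le_half (fun i ↦ ⟨(hx i).1, hhalf i⟩) hsum
      (Function.ne_iff.1 hne)
  · obtain ⟨k, hk⟩ := not_forall.1 hhalf
    exact sum_negMulLogDiff_lt_of_half_lt hcard hx hsum (not_le.1 hk)

end Simplex

lemma mul_negMulLogDiff_one_div {n : ℝ} (hn : 1 < n) :
    n * negMulLogDiff (1 / n) = (n - 1) * log (n - 1) - (n - 2) * log n := by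
  have hlog : log (1 - 1 / n) = log (n - 1) - log n := by
    rw [← log_div (by linarith) (by linarith)]
    congr 1
    field_simp
  rw [negMulLogDiff, negMulLog, negMulLog, hlog, one_div, log_inv]
  field_simp
  ring

lemma log_sub_one_pow_div_pow {d : ℕ} (hd : 2 ≤ d) :
    log (((d : ℝ) - 1) ^ (d - 1) / (d : ℝ) ^ (d - 2)) =
      ((d : ℝ) - 1) * log ((d : ℝ) - 1) - ((d : ℝ) - 2) * log d := by
  have hd' : (2 : ℝ) ≤ d := by exact_mod_cast hd
  rw [log_div (pow_ne_zero _ (by linarith)) (by positivity), log_pow, log_pow,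
    Nat.cast_sub (by omega), Nat.cast_sub hd]
  push_cast
  ring

/-- For `d ≥ 3`, the function
`φ_v(x) = ∑ᵢ ((1 − xᵢ) ln(1 − xᵢ) − xᵢ ln xᵢ)` attains its maximum on the simplex
`Σ_d = {x ∈ [0,1]^d : ∑ xᵢ = 1}` at the unique point `(1/d,…,1/d)`, with maximum value
`(d−1) ln(d−1) − (d−2) ln d = ln((d−1)^{d−1}/d^{d−2})`. -/
theorem stmt_4 (d : ℕ) (hd : 3 ≤ d)
    (φ : (Fin d → ℝ) → ℝ)
    (hφ : ∀ x : Fin d → ℝ,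
      φ x = ∑ i, ((1 - x i) * Real.log (1 - x i) - x i * Real.log (x i))) :
    (∀ x : Fin d → ℝ, (∀ i, x i ∈ Set.Icc (0:ℝ) 1) → (∑ i, x i) = 1 →
        x ≠ (fun _ => 1 / (d:ℝ)) → φ x < φ (fun _ => 1 / (d:ℝ))) ∧
    φ (fun _ => 1 / (d:ℝ)) =
      ((d:ℝ) - 1) * Real.log ((d:ℝ) - 1) - ((d:ℝ) - 2) * Real.log (d:ℝ) ∧
    φ (fun _ => 1 / (d:ℝ)) =
      Real.log (((d:ℝ) - 1) ^ (d - 1) / (d:ℝ) ^ (d - 2)) := by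
  have hφ' : ∀ x, φ x = ∑ i, negMulLogDiff (x i) := fun x ↦ by
    rw [hφ]
    refine sum_congr rfl fun i _ ↦ ?_
    rw [negMulLogDiff, negMulLog, negMulLog]
    ring
  have hmax : φ (fun _ ↦ 1 / (d : ℝ)) = d * negMulLogDiff (1 / d) := by
    rw [hφ', sum_const, card_univ, Fintype.card_fin, nsmul_eq_mul]
  have hval := mul_negMulLogDiff_one_div (n := d) (by exact_mod_cast (by omega : 1 < d))
  refine ⟨fun x hx hsum hne ↦ ?_, by rw [hmax, hval],
    by rw [hmax, hval, log_sub_one_pow_div_pow (by omega)]⟩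
  rw [hφ', hmax]
  simpa only [Fintype.card_fin] using
    sum_negMulLogDiff_lt_of_ne (by simpa only [Fintype.card_fin] using hd) hx hsum
      (by simpa only [Fintype.card_fin] using hne)
end

section
/- Let G be a finite d-regular simple graph with vertex set V(G) of size g and edge set E(G), where d ≥ 3. Let K = [0,1]^{E(G)} and W = {x ∈ ℝ^{E(G)} : Σ_{e ∋ v} x_e = 1 for every vertex v}. Then the function φ(x) = Σ_{e ∈ E(G)} ((1 − x_e) ln(1 − x_e) − x_e ln(x_e)) (with 0·ln 0 = 0) has a unique maximum on K ∩ W, attained at the point x⁰ = (1/d, …, 1/d), with maximum value φ(x⁰) = (g/2) ln((d−1)^{d−1}/d^{d−2}); moreover the Hessian of φ at x⁰ is D²φ(x⁰) = −(d(d−2)/(d−1)) · I. -/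
/-!
Write `f t = entropyGap t = (1 - t) log (1 - t) - t log t`, so that `φ x = ∑ₑ f (x e)`. Every
edge has two ends, hence `2 φ x = ∑ᵥ ∑_{e ∋ v} f (x e)`, and on `K ∩ W` the values at the `d`
edges through a vertex form a probability vector. It therefore suffices that
`∑ᵢ f (pᵢ) ≤ d f (1/d)` on the standard simplex, with equality only at the barycentre. As `f` is
concave only on `[0, 1/2]`, this is proved by smoothing: replacing two distinct coordinates with
sum `< 1` by their mean increases the sum, and for `d ≥ 3` a point other than the barycentre
admitting no such move is a vertex, where the sum is `0 < d f (1/d)`. As the simplex is compact,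
a maximiser exists, and it can only be the barycentre. The Hessian is diagonal, with entries
`f'' (1/d) = d / (d - 1) - d`.
-/

open Real Finset Topology

lemma IsCompact.forall_lt_of_forall_exists_gt {α β : Type*} [TopologicalSpace α]
    [TopologicalSpace β] [LinearOrder β] [ClosedIciTopology β] {s : Set α} (hs : IsCompact s)
    {f : α → β} (hf : ContinuousOn f s) {c : α} (hc : c ∈ s)
    (h : ∀ x ∈ s, x ≠ c → ∃ y ∈ s, f x < f y) : ∀ x ∈ s, x ≠ c → f x < f c := by
  obtain ⟨m, hm, hmax⟩ := hs.exists_isMaxOn ⟨c, hc⟩ hf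
  obtain rfl : m = c := by
    by_contra hne
    obtain ⟨y, hy, hlt⟩ := h m hm hne
    exact (hmax hy).not_gt hlt
  intro x hx hxm
  obtain ⟨y, hy, hlt⟩ := h x hx hxm
  exact hlt.trans_le (hmax hy)

lemma fderiv_fderiv_sum_apply {ι : Type*} [Fintype ι] {F F' F'' : ℝ → ℝ} {U : Set ℝ}
    (hU : IsOpen U) (hF : ∀ t ∈ U, HasDerivAt F (F' t) t)
    (hF' : ∀ t ∈ U, HasDerivAt F' (F'' t) t) {a : ι → ℝ} (ha : ∀ i, a i ∈ U) (y z : ι → ℝ) :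
    fderiv ℝ (fderiv ℝ fun x : ι → ℝ => ∑ i, F (x i)) a y z = ∑ i, F'' (a i) * y i * z i := by
  let proj (i : ι) : (ι → ℝ) →L[ℝ] ℝ := ContinuousLinearMap.proj i
  set D1 : (ι → ℝ) → (ι → ℝ) →L[ℝ] ℝ := fun x => ∑ i, F' (x i) • proj i
  have hD1 : ∀ x ∈ Set.univ.pi fun _ => U,
      HasFDerivAt (fun x : ι → ℝ => ∑ i, F (x i)) (D1 x) x := fun x hx =>
    HasFDerivAt.fun_sum fun i _ =>
      (hF _ (hx i trivial)).comp_hasFDerivAt x (hasFDerivAt_apply (𝕜 := ℝ) i x)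
  have hD2 : HasFDerivAt D1 (∑ i, (F'' (a i) • proj i).smulRight (proj i)) a :=
    HasFDerivAt.fun_sum fun i _ =>
      ((hF' _ (ha i)).comp_hasFDerivAt a (hasFDerivAt_apply (𝕜 := ℝ) i a)).smul_const (proj i)
  have hev : fderiv ℝ (fun x : ι → ℝ => ∑ i, F (x i)) =ᶠ[𝓝 a] D1 := by
    filter_upwards [(isOpen_set_pi Set.finite_univ fun i _ => hU).mem_nhds fun i _ => ha i]
      with x hx
    exact (hD1 x hx).fderiv
  rw [hev.fderiv_eq, hD2.fderiv]
  simp [proj, mul_comm, mul_left_comm]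

lemma Fintype.sum_ite_eq_sum_subtype {α M : Type*} [Fintype α] [AddCommMonoid M] (P : α → Prop)
    [DecidablePred P] (f : α → M) : (∑ a, if P a then f a else 0) = ∑ a : {a // P a}, f a := by
  rw [← sum_filter, ← sum_subtype_eq_sum_filter, subtype_univ]

noncomputable def entropyGap (t : ℝ) : ℝ := negMulLog t - negMulLog (1 - t)

lemma entropyGap_apply (t : ℝ) : entropyGap t = (1 - t) * log (1 - t) - t * log t := by
  simp only [entropyGap, negMulLog]
  ring

lemma continuous_entropyGap : Continuous entropyGap := by
  unfold entropyGap
  fun_prop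

@[simp] lemma entropyGap_zero : entropyGap 0 = 0 := by simp [entropyGap]

@[simp] lemma entropyGap_one : entropyGap 1 = 0 := by simp [entropyGap]

lemma hasDerivAt_entropyGap {t : ℝ} (h0 : t ≠ 0) (h1 : t ≠ 1) :
    HasDerivAt entropyGap (-log t - log (1 - t) - 2) t := by
  have h1' : 1 - t ≠ 0 := sub_ne_zero.2 h1.symm
  have hsub : HasDerivAt (fun t => negMulLog (1 - t)) ((-log (1 - t) - 1) * -1) t :=
    (hasDerivAt_negMulLog h1').comp t ((hasDerivAt_id t).const_sub 1)
  exact ((hasDerivAt_negMulLog h0).sub hsub).congr_deriv (by ring)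

lemma hasDerivAt_deriv_entropyGap {t : ℝ} (h0 : t ≠ 0) (h1 : t ≠ 1) :
    HasDerivAt (fun t => -log t - log (1 - t) - 2) ((1 - t)⁻¹ - t⁻¹) t := by
  have h1' : 1 - t ≠ 0 := sub_ne_zero.2 h1.symm
  have hsub : HasDerivAt (fun t => log (1 - t)) ((1 - t)⁻¹ * -1) t :=
    (hasDerivAt_log h1').comp t ((hasDerivAt_id t).const_sub 1)
  exact (((hasDerivAt_log h0).neg.sub hsub).sub_const 2).congr_deriv (by ring)

lemma entropyGap_pos {t : ℝ} (h0 : 0 < t) (ht : t < exp (-1)) : 0 < entropyGap t := by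
  have hlog : log t < -1 := (log_lt_iff_lt_exp h0).2 ht
  have hrest : negMulLog (1 - t) ≤ t := by
    have ht1 : t < 1 := by linarith [exp_neg_one_lt_half]
    simpa using negMulLog_le_one_sub_self (x := 1 - t) (by linarith)
  rw [entropyGap, negMulLog]
  nlinarith

lemma entropyGap_inv_natCast_pos {d : ℕ} (hd : 3 ≤ d) : 0 < entropyGap (d : ℝ)⁻¹ := by
  have hd' : (3 : ℝ) ≤ d := by exact_mod_cast hd
  refine entropyGap_pos (by positivity) ?_
  rw [exp_neg]
  exact inv_strictAnti₀ (exp_pos 1) (exp_one_lt_three.trans_le hd')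

lemma natCast_mul_entropyGap_inv {d : ℕ} (hd : 2 ≤ d) :
    (d : ℝ) * entropyGap (1 / d) = log (((d : ℝ) - 1) ^ (d - 1) / (d : ℝ) ^ (d - 2)) := by
  have hd' : (2 : ℝ) ≤ d := by exact_mod_cast hd
  have hsub : 1 - 1 / (d : ℝ) = ((d : ℝ) - 1) / d := by field_simp
  rw [log_div (pow_pos (by linarith) _).ne' (by positivity), log_pow, log_pow,
    Nat.cast_sub (by omega : 1 ≤ d), Nat.cast_sub hd, entropyGap_apply, hsub,
    log_div (by linarith) (by positivity), one_div, log_inv]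
  field_simp
  push_cast
  ring

lemma entropyGap_add_lt_two_mul_midpoint {a b : ℝ} (ha : 0 ≤ a) (hb : 0 ≤ b) (hab : a + b < 1)
    (hne : a ≠ b) : entropyGap a + entropyGap b < 2 * entropyGap ((a + b) / 2) := by
  wlog hlt : a < b generalizing a b
  · have := this hb ha (by linarith) hne.symm (lt_of_le_of_ne (not_lt.1 hlt) hne.symm)
    rwa [add_comm b, add_comm (entropyGap b)] at this
  set s := a + b
  -- The derivative is `log ((s - t) (1 - (s - t))) - log (t (1 - t)) > 0` for `t < s / 2`.
  have hmono : StrictMonoOn (fun t => entropyGap t + entropyGap (s - t)) (Set.Icc a (s / 2)) := by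
    refine strictMonoOn_of_deriv_pos (convex_Icc _ _)
      (continuous_entropyGap.add (continuous_entropyGap.comp (continuous_sub_left s))).continuousOn
      fun t ht => ?_
    rw [interior_Icc] at ht
    obtain ⟨hat, hts⟩ := ht
    have ht0 : 0 < t := ha.trans_lt hat
    have hst : 0 < s - t := by linarith
    have hderiv : HasDerivAt (fun t => entropyGap t + entropyGap (s - t))
        ((-log t - log (1 - t) - 2) + (-log (s - t) - log (1 - (s - t)) - 2) * -1) t :=
      (hasDerivAt_entropyGap ht0.ne' (by linarith)).add
        ((hasDerivAt_entropyGap hst.ne' (by linarith)).comp t ((hasDerivAt_id t).const_sub s))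
    rw [hderiv.deriv]
    have key : t * (1 - t) < (s - t) * (1 - (s - t)) := by nlinarith
    have hlog := log_lt_log (by nlinarith) key
    rw [log_mul ht0.ne' (by linarith), log_mul hst.ne' (by linarith)] at hlog
    linarith
  have := hmono ⟨le_rfl, by linarith⟩ ⟨by linarith, le_rfl⟩ (by linarith : a < s / 2)
  simp only [show s - a = b by ring, show s - s / 2 = s / 2 by ring] at this
  linarith

section Simplex

variable {ι : Type*} [Fintype ι]

noncomputable def averageAt [DecidableEq ι] (p : ι → ℝ) (i j : ι) : ι → ℝ :=
  fun k => if k = i ∨ k = j then (p i + p j) / 2 else p k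

lemma sum_comp_averageAt [DecidableEq ι] (F : ℝ → ℝ) (p : ι → ℝ) {i j : ι} (hij : i ≠ j) :
    ∑ k, F (averageAt p i j k) =
      ∑ k, F (p k) + (2 * F ((p i + p j) / 2) - F (p i) - F (p j)) := by
  rw [← sub_eq_iff_eq_add', ← sum_sub_distrib, Fintype.sum_eq_add i j hij]
  · simp [averageAt, hij.symm]
    ring
  · intro k hk
    simp [averageAt, hk.1, hk.2]

lemma averageAt_mem_stdSimplex [DecidableEq ι] {p : ι → ℝ} (hp : p ∈ stdSimplex ℝ ι) {i j : ι}
    (hij : i ≠ j) : averageAt p i j ∈ stdSimplex ℝ ι := by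
  refine ⟨fun k => ?_, ?_⟩
  · unfold averageAt
    split_ifs
    · linarith [hp.1 i, hp.1 j]
    · exact hp.1 k
  · have := sum_comp_averageAt id p hij
    simp only [id, hp.2] at this
    rw [this]
    ring

lemma sum_entropyGap_lt_averageAt [DecidableEq ι] {p : ι → ℝ} (hp : p ∈ stdSimplex ℝ ι)
    {i j : ι} (hne : p i ≠ p j) (hlt : p i + p j < 1) :
    ∑ k, entropyGap (p k) < ∑ k, entropyGap (averageAt p i j k) := by
  rw [sum_comp_averageAt _ p fun h => hne (congrArg p h)]
  linarith [entropyGap_add_lt_two_mul_midpoint (hp.1 i) (hp.1 j) hlt hne]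

lemma sum_le_one_of_mem_stdSimplex {p : ι → ℝ} (hp : p ∈ stdSimplex ℝ ι) (s : Finset ι) :
    ∑ i ∈ s, p i ≤ 1 :=
  hp.2 ▸ sum_le_sum_of_subset_of_nonneg (subset_univ s) fun i _ _ => hp.1 i

lemma exists_ne_add_lt_one {p : ι → ℝ} (hp : p ∈ stdSimplex ℝ ι) (hι : 3 ≤ Fintype.card ι)
    {k l : ι} (hk0 : 0 < p k) (hk1 : p k < 1) (hl : p l ≠ p k) :
    ∃ i j, p i ≠ p j ∧ p i + p j < 1 := by
  classical
  by_contra! h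
  have hkl : k ≠ l := fun h => hl (congrArg p h.symm)
  obtain ⟨m, -, hm⟩ : ∃ m ∈ univ, m ∉ ({k, l} : Finset ι) :=
    exists_mem_notMem_of_card_lt_card ((card_le_two).trans_lt hι)
  simp only [mem_insert, mem_singleton, not_or] at hm
  have htriple := sum_le_one_of_mem_stdSimplex hp {k, l, m}
  rw [sum_insert (by simp [hkl, Ne.symm hm.1]), sum_pair (Ne.symm hm.2)] at htriple
  have hm0 : p m = 0 := le_antisymm (by linarith [h k l hl.symm]) (hp.1 m)
  linarith [h k m (by rw [hm0]; exact hk0.ne')]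

lemma sum_entropyGap_lt_of_mem_stdSimplex (hι : 3 ≤ Fintype.card ι) {p : ι → ℝ}
    (hp : p ∈ stdSimplex ℝ ι) (hpc : p ≠ fun _ => (Fintype.card ι : ℝ)⁻¹) :
    ∑ k, entropyGap (p k) < Fintype.card ι * entropyGap (Fintype.card ι : ℝ)⁻¹ := by
  classical
  have : Nonempty ι := Fintype.card_pos_iff.1 (by omega)
  have hc : (fun _ => (Fintype.card ι : ℝ)⁻¹) ∈ stdSimplex ℝ ι := stdSimplex.barycenter.2
  have hcval : ∑ _k : ι, entropyGap (Fintype.card ι : ℝ)⁻¹ =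
      Fintype.card ι * entropyGap (Fintype.card ι : ℝ)⁻¹ := by
    simp
  rw [← hcval]
  refine (isCompact_stdSimplex ℝ ι).forall_lt_of_forall_exists_gt
    (f := fun q : ι → ℝ => ∑ k, entropyGap (q k))
    (continuous_finsetSum _ fun k _ => continuous_entropyGap.comp (continuous_apply k)).continuousOn
    hc (fun q hq hqc => ?_) p hp hpc
  have hnc : ∀ k, ∃ l, q l ≠ q k := by
    by_contra! ⟨k, hconst⟩
    have hsum : (Fintype.card ι : ℝ) * q k = 1 := by simpa [hconst] using hq.2
    exact hqc (funext fun l => by rw [hconst l, eq_inv_of_mul_eq_one_right hsum])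
  by_cases hk : ∃ k, 0 < q k ∧ q k < 1
  · obtain ⟨k, hk0, hk1⟩ := hk
    obtain ⟨l, hl⟩ := hnc k
    obtain ⟨i, j, hne, hlt⟩ := exists_ne_add_lt_one hq hι hk0 hk1 hl
    exact ⟨averageAt q i j, averageAt_mem_stdSimplex hq fun h => hne (congrArg q h),
      sum_entropyGap_lt_averageAt hq hne hlt⟩
  · push Not at hk
    refine ⟨_, hc, ?_⟩
    have hq01 : ∀ k, q k = 0 ∨ q k = 1 := fun k => by
      rcases (hq.1 k).eq_or_lt with h | h
      · exact Or.inl h.symm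
      · exact Or.inr (le_antisymm (mem_Icc_of_mem_stdSimplex hq k).2 (hk k h))
    have hzero : ∑ k, entropyGap (q k) = 0 :=
      sum_eq_zero fun k _ => by rcases hq01 k with h | h <;> simp [h]
    rw [hzero, hcval]
    exact mul_pos (by positivity) (entropyGap_inv_natCast_pos hι)

lemma sum_entropyGap_le_of_mem_stdSimplex (hι : 3 ≤ Fintype.card ι) {p : ι → ℝ}
    (hp : p ∈ stdSimplex ℝ ι) :
    ∑ k, entropyGap (p k) ≤ Fintype.card ι * entropyGap (Fintype.card ι : ℝ)⁻¹ := by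
  by_cases hpc : p = fun _ => (Fintype.card ι : ℝ)⁻¹
  · simp [hpc]
  · exact (sum_entropyGap_lt_of_mem_stdSimplex hι hp hpc).le

end Simplex

section Graph

variable {V : Type*} [Fintype V] [DecidableEq V] {G : SimpleGraph V} [DecidableRel G.Adj]

lemma SimpleGraph.card_subtype_mem_edgeSet (v : V) :
    Fintype.card {e : G.edgeSet // v ∈ (e : Sym2 V)} = G.degree v := by
  rw [← G.card_incidenceSet_eq_degree]
  exact Fintype.card_congr (Equiv.subtypeSubtypeEquivSubtypeInter (· ∈ G.edgeSet) (v ∈ ·))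

lemma SimpleGraph.sum_sum_ite_mem_edgeSet (F : G.edgeSet → ℝ) :
    ∑ v, ∑ e : G.edgeSet, (if v ∈ (e : Sym2 V) then F e else 0) = 2 * ∑ e, F e := by
  rw [sum_comm, mul_sum]
  refine sum_congr rfl fun e _ => ?_
  have hfilter : ({v | v ∈ (e : Sym2 V)} : Finset V) = (e : Sym2 V).toFinset := by ext; simp
  rw [sum_ite, sum_const_zero, add_zero, sum_const, hfilter,
    Sym2.card_toFinset_of_not_isDiag _ (G.not_isDiag_of_mem_edgeSet e.2), two_smul, two_mul]

lemma SimpleGraph.incident_mem_stdSimplex {x : G.edgeSet → ℝ} (hx : ∀ e, 0 ≤ x e) {v : V}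
    (hv : ∑ e : G.edgeSet, (if v ∈ (e : Sym2 V) then x e else 0) = 1) :
    (fun e : {e : G.edgeSet // v ∈ (e : Sym2 V)} => x e) ∈ stdSimplex ℝ _ :=
  ⟨fun e => hx e, by rwa [← Fintype.sum_ite_eq_sum_subtype]⟩

variable {d : ℕ} {x : G.edgeSet → ℝ} {v : V}

lemma SimpleGraph.sum_ite_mem_entropyGap_le (hreg : G.IsRegularOfDegree d) (hd : 3 ≤ d)
    (hx : ∀ e, 0 ≤ x e) (hv : ∑ e : G.edgeSet, (if v ∈ (e : Sym2 V) then x e else 0) = 1) :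
    (∑ e : G.edgeSet, if v ∈ (e : Sym2 V) then entropyGap (x e) else 0) ≤
      d * entropyGap (1 / d) := by
  have hcard := (G.card_subtype_mem_edgeSet v).trans (hreg v)
  rw [Fintype.sum_ite_eq_sum_subtype, one_div, ← hcard]
  exact sum_entropyGap_le_of_mem_stdSimplex (by omega) (G.incident_mem_stdSimplex hx hv)

lemma SimpleGraph.sum_ite_mem_entropyGap_lt (hreg : G.IsRegularOfDegree d) (hd : 3 ≤ d)
    (hx : ∀ e, 0 ≤ x e) (hv : ∑ e : G.edgeSet, (if v ∈ (e : Sym2 V) then x e else 0) = 1)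
    (he : ∃ e : G.edgeSet, v ∈ (e : Sym2 V) ∧ x e ≠ 1 / d) :
    (∑ e : G.edgeSet, if v ∈ (e : Sym2 V) then entropyGap (x e) else 0) <
      d * entropyGap (1 / d) := by
  obtain ⟨e, hve, hxe⟩ := he
  have hcard := (G.card_subtype_mem_edgeSet v).trans (hreg v)
  rw [Fintype.sum_ite_eq_sum_subtype, one_div, ← hcard]
  refine sum_entropyGap_lt_of_mem_stdSimplex (by omega) (G.incident_mem_stdSimplex hx hv)
    fun h => hxe ?_
  simpa [hcard] using congrFun h ⟨e, hve⟩

end Graph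

open Classical in
/-- For a finite `d`-regular simple graph `G` (`d ≥ 3`) with `g` vertices,
the function `φ(x) = ∑_e ((1−x_e) ln(1−x_e) − x_e ln x_e)` on `ℝ^{E(G)}` has a unique
maximum on `K ∩ W` (where `K = [0,1]^{E(G)}` and `W` is defined by `∑_{e∋v} x_e = 1` for
all `v`), attained at `x⁰ = (1/d,…,1/d)`, with maximum value
`(g/2)·ln((d−1)^{d−1}/d^{d−2})`; moreover the Hessian of `φ` at `x⁰` is
`−(d(d−2)/(d−1))·I` (as a bilinear form). -/
theorem stmt_5 {V : Type*} [Fintype V] [DecidableEq V] (G : SimpleGraph V)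
    [DecidableRel G.Adj] (d g : ℕ) (hd : 3 ≤ d)
    (hreg : G.IsRegularOfDegree d) (hg : Fintype.card V = g)
    (φ : (G.edgeSet → ℝ) → ℝ)
    (hφ : ∀ x : G.edgeSet → ℝ,
      φ x = ∑ e : G.edgeSet, ((1 - x e) * Real.log (1 - x e) - x e * Real.log (x e))) :
    (∀ x : G.edgeSet → ℝ, (∀ e, x e ∈ Set.Icc (0:ℝ) 1) →
        (∀ v : V, (∑ e : G.edgeSet, if v ∈ (e : Sym2 V) then x e else 0) = 1) →
        x ≠ (fun _ => 1 / (d:ℝ)) → φ x < φ (fun _ => 1 / (d:ℝ))) ∧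
    φ (fun _ => 1 / (d:ℝ)) =
      (g : ℝ) / 2 * Real.log (((d:ℝ) - 1) ^ (d - 1) / (d:ℝ) ^ (d - 2)) ∧
    (∀ y z : G.edgeSet → ℝ,
      (fderiv ℝ (fderiv ℝ φ) (fun _ => 1 / (d:ℝ)) y) z =
        -((d:ℝ) * ((d:ℝ) - 2) / ((d:ℝ) - 1)) * ∑ e : G.edgeSet, y e * z e) := by
  obtain rfl : φ = fun x => ∑ e, entropyGap (x e) :=
    funext fun x => by simp only [hφ, entropyGap_apply]
  have hlocal : ∀ v : V, (∑ e : G.edgeSet, if v ∈ (e : Sym2 V) then entropyGap (1 / d) else 0) =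
      d * entropyGap (1 / d) := fun v => by
    rw [Fintype.sum_ite_eq_sum_subtype, sum_const, card_univ, G.card_subtype_mem_edgeSet,
      hreg v, nsmul_eq_mul]
  refine ⟨fun x hx hW hne => ?_, ?_, fun y z => ?_⟩
  · obtain ⟨e₀, he₀⟩ : ∃ e, x e ≠ 1 / d := by
      by_contra! h
      exact hne (funext h)
    have hx0 : ∀ e, 0 ≤ x e := fun e => (hx e).1
    have hlt := sum_lt_sum (s := univ)
      (fun v _ => (G.sum_ite_mem_entropyGap_le hreg hd hx0 (hW v)).trans_eq (hlocal v).symm)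
      ⟨_, mem_univ _, (G.sum_ite_mem_entropyGap_lt hreg hd hx0 (hW _)
        ⟨e₀, Sym2.out_fst_mem _, he₀⟩).trans_eq (hlocal _).symm⟩
    rw [G.sum_sum_ite_mem_edgeSet, G.sum_sum_ite_mem_edgeSet] at hlt
    linarith
  · have hcenter := G.sum_sum_ite_mem_edgeSet fun _ => entropyGap (1 / d)
    simp only [hlocal, sum_const, card_univ, hg, nsmul_eq_mul] at hcenter ⊢
    rw [← natCast_mul_entropyGap_inv (by omega)]
    linarith
  · have hd' : (3 : ℝ) ≤ d := by exact_mod_cast hd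
    rw [fderiv_fderiv_sum_apply isOpen_Ioo
      (fun t ht => hasDerivAt_entropyGap ht.1.ne' ht.2.ne)
      (fun t ht => hasDerivAt_deriv_entropyGap ht.1.ne' ht.2.ne)
      (fun _ => ⟨by positivity, (div_lt_one (by positivity)).2 (by linarith)⟩), mul_sum]
    have hd1 : (d : ℝ) - 1 ≠ 0 := by linarith
    refine sum_congr rfl fun e _ => ?_
    field_simp
    ring
end

section
/- Let G be a finite d-regular simple graph with g vertices and adjacency matrix A, where d ≥ 3. Let R be the dg × dg matrix indexed by the darts of G (ordered pairs (u,v) with uv an edge of G), with R_{(u,v),(p,q)} = 1 if p = v and (p,q) ≠ (v,u), and 0 otherwise. Then for every λ, det(λI − R) = (λ² − 1)^{(d−2)g/2} · det((λ² + d − 1)I − λA). Consequently, the eigenvalues of R are: the two roots β_i^± = α_i/2 ± (α_i²/4 − (d−1))^{1/2} of x² − α_i x + (d−1) = 0 for each eigenvalue α_i of A (i = 1,…,g), together with 1 and −1, each repeated g(d−2)/2 times. -/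
/-!
Write the non-backtracking matrix as `B = M Nᵀ - J`, where `N` and `M` are the incidence
matrices of darts with their tails and heads and `J` is the permutation matrix of dart
reversal. Since `J² = 1`, `(x - J)(x - B) = (x² - 1) - (x - J) M Nᵀ`, and Sylvester's determinant
identity trades `(x - J) M Nᵀ` for `Nᵀ (x - J) M = x A - D`, with `D` the degree matrix. As `J`
is a product of `|E|` disjoint transpositions, `det (x - J) = (x² - 1)^|E|`. For `d`-regular `G`
we have `2|E| = d|V|`, and cancelling powers of `x² - 1` gives the determinant formula wherever
`x² ≠ 1`, hence as an identity of polynomials. The eigenvalues follow by factoring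
`det ((x² + d - 1) - x A)` through the eigenvalues of `A`.
-/

open Polynomial Matrix
open scoped Kronecker

namespace Matrix

variable {m n K : Type*} [Fintype m] [Fintype n] [DecidableEq m] [DecidableEq n]

theorem det_smul_one_sub_eq_eval_charpoly [CommRing K] (M : Matrix n n K) (t : K) :
    det (t • 1 - M) = M.charpoly.eval t := by
  rw [eval_charpoly, smul_one_eq_diagonal]
  rfl

theorem pow_card_mul_det_smul_one_sub_mul_comm [CommRing K] (A : Matrix m n K)
    (B : Matrix n m K) (c : K) :
    c ^ Fintype.card n * det (c • 1 - A * B) = c ^ Fintype.card m * det (c • 1 - B * A) := by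
  simpa [det_smul_one_sub_eq_eval_charpoly] using congrArg (eval c) (charpoly_mul_comm' A B)

theorem det_smul_one_sub_smul_of_charpoly_eq_prod [Field K] {ι : Type*} [Fintype ι]
    (A : Matrix n n K) (α : ι → K) (hA : A.charpoly = ∏ i, (X - C (α i))) (p x : K) :
    det (p • 1 - x • A) = ∏ i, (p - x * α i) := by
  have hcard : Fintype.card ι = Fintype.card n := by
    rw [← A.charpoly_natDegree_eq_dim, hA, natDegree_finsetProd_X_sub_C_eq_card,
      Finset.card_univ]
  rcases eq_or_ne x 0 with rfl | hx
  · simp [hcard]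
  · have hfactor : p • (1 : Matrix n n K) - x • A = x • ((p / x) • 1 - A) := by
      rw [smul_sub, smul_smul, mul_div_cancel₀ _ hx]
    have hdet : det ((p / x) • (1 : Matrix n n K) - A) = ∏ i, (p / x - α i) := by
      rw [det_smul_one_sub_eq_eval_charpoly, hA, eval_prod]
      simp
    rw [hfactor, det_smul, ← hcard, hdet, ← Finset.card_univ, ← Finset.prod_const,
      ← Finset.prod_mul_distrib]
    refine Finset.prod_congr rfl fun i _ => ?_
    field_simp

theorem det_sq_add_smul_one_sub_smul_of_charpoly_eq_prod [Field K] {ι : Type*} [Fintype ι]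
    (A : Matrix n n K) (α : ι → K) (hA : A.charpoly = ∏ i, (X - C (α i))) (c x : K) :
    det ((x ^ 2 + c) • 1 - x • A) = (∏ i, (X ^ 2 - C (α i) * X + C c)).eval x := by
  rw [det_smul_one_sub_smul_of_charpoly_eq_prod A α hA, eval_prod]
  refine Finset.prod_congr rfl fun i _ => ?_
  simp only [eval_add, eval_sub, eval_mul, eval_pow, eval_X, eval_C]
  ring

theorem det_smul_one_sub_permMatrix_of_involutive [CommRing K] (σ : Equiv.Perm n)
    (hσ : Function.Involutive σ) (hfix : ∀ i, σ i ≠ i) (x : K) :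
    det (x • 1 - σ.permMatrix K) = (x ^ 2 - 1) ^ (Fintype.card n / 2) := by
  let _ : LinearOrder n := LinearOrder.lift' _ (Fintype.equivFin n).injective
  -- Each orbit `{i, σ i}` is listed as `(0, i), (1, i)` with `i < σ i`.
  let f : Fin 2 × {i // i < σ i} → n := fun p => if p.1 = 0 then p.2 else σ p.2
  have hf_symm : ∀ k a, σ (f (k, a)) = f (k.rev, a) := by
    intro k a; fin_cases k <;> simp [f, hσ _]
  have hf_inj : f.Injective := by
    rintro ⟨k, a, ha⟩ ⟨l, b, hb⟩ h
    fin_cases k <;> fin_cases l <;> simp [f] at h ⊢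
    · exact h
    · subst h; rw [hσ] at ha; exact lt_asymm ha hb
    · subst h; rw [hσ] at hb; exact lt_asymm ha hb
    · exact h
  have hf_surj : f.Surjective := by
    intro i
    by_cases hi : i < σ i
    · exact ⟨(0, ⟨i, hi⟩), rfl⟩
    · have hσi : σ i < σ (σ i) := by
        rw [hσ i]; exact lt_of_le_of_ne (not_lt.mp hi) (hfix i)
      exact ⟨(1, ⟨σ i, hσi⟩), by simp [f, hσ i]⟩
  obtain ⟨e, he⟩ : ∃ e : Fin 2 × {i // i < σ i} ≃ n, ⇑e = f :=
    ⟨Equiv.ofBijective f ⟨hf_inj, hf_surj⟩, rfl⟩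
  have hcard : Fintype.card n = 2 * Fintype.card {i // i < σ i} := by
    rw [← Fintype.card_congr e, Fintype.card_prod, Fintype.card_fin]
  have hblocks : (x • 1 - σ.permMatrix K).submatrix f f =
      !![x, -1; -1, x] ⊗ₖ (1 : Matrix {i // i < σ i} {i // i < σ i} K) := by
    ext ⟨k, a⟩ ⟨l, b⟩
    simp only [submatrix_apply, sub_apply, smul_apply, one_apply, PEquiv.toMatrix_apply,
      Equiv.toPEquiv_apply, Option.mem_def, Option.some.injEq, hf_symm, hf_inj.eq_iff,
      kroneckerMap_apply, Prod.mk.injEq]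
    fin_cases k <;> fin_cases l <;> simp <;> split_ifs <;> simp
  rw [← det_submatrix_equiv_self e, he, hblocks, det_kronecker, det_one, det_fin_two_of, hcard,
    Nat.mul_div_cancel_left _ two_pos]
  ring

end Matrix

theorem Polynomial.roots_X_sq_sub_one {R : Type*} [CommRing R] [IsDomain R] :
    (X ^ 2 - 1 : R[X]).roots = {1, -1} := by
  have hfactor : (X ^ 2 - 1 : R[X]) = (X - C 1) * (X - C (-1)) := by
    simp only [map_one, map_neg]
    ring
  rw [hfactor, roots_mul (mul_ne_zero (X_sub_C_ne_zero 1) (X_sub_C_ne_zero (-1))),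
    roots_X_sub_C, roots_X_sub_C, Multiset.singleton_add, Multiset.insert_eq_cons]

namespace SimpleGraph

variable {V : Type*} [DecidableEq V] (G : SimpleGraph V)

section CommRing

variable (K : Type*) [CommRing K]

def dartFstMatrix : Matrix G.Dart V K := of fun e v => if e.fst = v then 1 else 0

def dartSndMatrix : Matrix G.Dart V K := of fun e v => if e.snd = v then 1 else 0

def dartSymmPerm : Equiv.Perm G.Dart := Dart.symm_involutive.toPerm

def nonBacktrackingMatrix : Matrix G.Dart G.Dart K :=
  of fun a b => if b.fst = a.snd ∧ b ≠ a.symm then 1 else 0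

variable [Fintype V]

theorem nonBacktrackingMatrix_eq :
    G.nonBacktrackingMatrix K =
      G.dartSndMatrix K * (G.dartFstMatrix K)ᵀ - G.dartSymmPerm.permMatrix K := by
  ext a b
  simp only [nonBacktrackingMatrix, dartSndMatrix, dartFstMatrix, dartSymmPerm, of_apply,
    Matrix.sub_apply, mul_apply, transpose_apply, ite_mul, one_mul, zero_mul,
    Finset.sum_ite_eq, Finset.mem_univ, if_true, PEquiv.toMatrix_apply, Equiv.toPEquiv_apply,
    Option.mem_def, Option.some.injEq, Function.Involutive.coe_toPerm]
  by_cases h : a.symm = b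
  · subst h
    simp
  · simp [h, Ne.symm h]

variable [DecidableRel G.Adj]

theorem dartFstMatrix_transpose_mul_dartSndMatrix :
    (G.dartFstMatrix K)ᵀ * G.dartSndMatrix K = G.adjMatrix K := by
  ext u v
  simp only [dartSndMatrix, dartFstMatrix, mul_apply, transpose_apply, of_apply, ite_mul,
    one_mul, zero_mul, ← ite_and, adjMatrix_apply]
  by_cases h : G.Adj u v
  · rw [Fintype.sum_eq_single ⟨(u, v), h⟩ fun j hj =>
      if_neg fun ⟨h1, h2⟩ => hj (Dart.ext _ _ (Prod.ext h1 h2))]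
    simp [h]
  · rw [if_neg h]
    exact Finset.sum_eq_zero fun j _ => if_neg fun ⟨h1, h2⟩ => h (h1 ▸ h2 ▸ j.adj)

theorem permMatrix_dartSymmPerm_mul_dartSndMatrix :
    G.dartSymmPerm.permMatrix K * G.dartSndMatrix K = G.dartFstMatrix K := by
  ext e v
  simp [dartSndMatrix, dartFstMatrix, dartSymmPerm, PEquiv.toMatrix_toPEquiv_mul]

theorem dartFstMatrix_transpose_mul_self :
    (G.dartFstMatrix K)ᵀ * G.dartFstMatrix K = diagonal fun v => (G.degree v : K) := by
  ext u v
  simp only [dartFstMatrix, mul_apply, transpose_apply, of_apply, ite_mul, one_mul, zero_mul,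
    ← ite_and]
  by_cases h : u = v
  · subst h
    simp [Finset.sum_boole, dart_fst_fiber_card_eq_degree]
  · rw [diagonal_apply_ne _ h]
    exact Finset.sum_eq_zero fun j _ => if_neg fun ⟨h1, h2⟩ => h (h1 ▸ h2)

theorem pow_mul_det_smul_one_sub_nonBacktrackingMatrix (x : K) :
    (x ^ 2 - 1) ^ (Fintype.card V + Fintype.card G.Dart / 2) *
        det (x • 1 - G.nonBacktrackingMatrix K) =
      (x ^ 2 - 1) ^ Fintype.card G.Dart *
        det ((x ^ 2 - 1) • 1 + diagonal (fun v => (G.degree v : K)) - x • G.adjMatrix K) := by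
  rw [nonBacktrackingMatrix_eq]
  set J := G.dartSymmPerm.permMatrix K
  set M := G.dartSndMatrix K
  set N := G.dartFstMatrix K
  set c := x ^ 2 - 1
  have hJJ : J * J = 1 := by
    rw [← permMatrix_mul, show G.dartSymmPerm * G.dartSymmPerm = 1 from
      Equiv.ext Dart.symm_symm, permMatrix_one]
  have hdetJ : det (x • 1 - J) = c ^ (Fintype.card G.Dart / 2) :=
    det_smul_one_sub_permMatrix_of_involutive _ Dart.symm_involutive Dart.symm_ne x
  have hfactor : (x • 1 - J) * (x • 1 - (M * Nᵀ - J)) = c • 1 - ((x • 1 - J) * M) * Nᵀ := by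
    simp only [Matrix.mul_sub, Matrix.sub_mul, Matrix.smul_mul, Matrix.mul_smul, Matrix.one_mul,
      Matrix.mul_one, hJJ, smul_sub, smul_smul, Matrix.mul_assoc, c, sub_smul, one_smul, pow_two]
    abel
  have hNP : Nᵀ * ((x • 1 - J) * M) = x • G.adjMatrix K - diagonal fun v => (G.degree v : K) := by
    rw [Matrix.sub_mul, Matrix.mul_sub, Matrix.smul_mul, Matrix.one_mul, Matrix.mul_smul,
      permMatrix_dartSymmPerm_mul_dartSndMatrix, dartFstMatrix_transpose_mul_dartSndMatrix,
      dartFstMatrix_transpose_mul_self]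
  calc c ^ (Fintype.card V + Fintype.card G.Dart / 2) * det (x • 1 - (M * Nᵀ - J))
      = c ^ Fintype.card V * det (c • 1 - ((x • 1 - J) * M) * Nᵀ) := by
        rw [← hfactor, det_mul, hdetJ, pow_add, mul_assoc]
    _ = c ^ Fintype.card G.Dart * det (c • 1 - Nᵀ * ((x • 1 - J) * M)) :=
        pow_card_mul_det_smul_one_sub_mul_comm _ _ c
    _ = _ := by rw [hNP, sub_sub_eq_add_sub]

theorem det_smul_one_sub_nonBacktrackingMatrix_of_isRegularOfDegree [IsDomain K] {d : ℕ}
    (hreg : G.IsRegularOfDegree d) (hd : 2 ≤ d) {x : K} (hx : x ^ 2 ≠ 1) :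
    det (x • 1 - G.nonBacktrackingMatrix K) =
      (x ^ 2 - 1) ^ ((d - 2) * Fintype.card V / 2) *
        det ((x ^ 2 + (d : K) - 1) • 1 - x • G.adjMatrix K) := by
  have hcard : Fintype.card G.Dart = d * Fintype.card V := by
    simp [dart_card_eq_sum_degrees, hreg.degree_eq, mul_comm]
  have hexp : Fintype.card G.Dart =
      (Fintype.card V + Fintype.card G.Dart / 2) + (d - 2) * Fintype.card V / 2 := by
    have hedges := G.dart_card_eq_twice_card_edges
    have hle : 2 * Fintype.card V ≤ d * Fintype.card V := Nat.mul_le_mul_right _ hd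
    rw [Nat.sub_mul]
    omega
  have hdiag : (x ^ 2 - 1) • (1 : Matrix V V K) + diagonal (fun v => (G.degree v : K)) =
      (x ^ 2 + (d : K) - 1) • 1 := by
    simp only [hreg.degree_eq, ← smul_one_eq_diagonal, ← add_smul, sub_add_eq_add_sub]
  refine mul_left_cancel₀ (pow_ne_zero (Fintype.card V + Fintype.card G.Dart / 2)
    (sub_ne_zero.mpr hx)) ?_
  rw [pow_mul_det_smul_one_sub_nonBacktrackingMatrix, hdiag, ← mul_assoc, ← pow_add, ← hexp]

end CommRing

variable [Fintype V] [DecidableRel G.Adj] (K : Type*) [Field K] [Infinite K]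

theorem charpoly_nonBacktrackingMatrix_of_isRegularOfDegree {d : ℕ}
    (hreg : G.IsRegularOfDegree d) (hd : 2 ≤ d) {ι : Type*} [Fintype ι] (α : ι → K)
    (hα : (G.adjMatrix K).charpoly = ∏ i, (X - C (α i))) :
    (G.nonBacktrackingMatrix K).charpoly =
      (X ^ 2 - 1) ^ ((d - 2) * Fintype.card V / 2) *
        ∏ i, (X ^ 2 - C (α i) * X + C ((d : K) - 1)) := by
  have hsq_eq_one : {x : K | x ^ 2 = 1}.Finite :=
    (Set.toFinite {1, -1}).subset fun x hx => by simpa using hx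
  refine eq_of_infinite_eval_eq _ _ (hsq_eq_one.infinite_compl.mono fun x (hx : x ^ 2 ≠ 1) => ?_)
  rw [Set.mem_ofPred_eq, ← det_smul_one_sub_eq_eval_charpoly,
    det_smul_one_sub_nonBacktrackingMatrix_of_isRegularOfDegree G K hreg hd hx, add_sub_assoc,
    det_sq_add_smul_one_sub_smul_of_charpoly_eq_prod _ α hα, eval_mul]
  simp

end SimpleGraph

open Polynomial in
open Classical in
/-- For a finite `d`-regular simple graph `G` (`d ≥ 3`) on `g` vertices with
adjacency matrix `A` (eigenvalues `α₁,…,α_g`), the non-backtracking dart matrix `R`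
satisfies `det(λI − R) = (λ² − 1)^{(d−2)g/2} · det((λ² + d − 1)I − λA)` for every `λ`;
consequently the eigenvalues of `R` (roots of its characteristic polynomial, with
multiplicity) are the two roots `β_i^±` of `x² − α_i x + (d − 1) = 0` for `i = 1,…,g`,
together with `1` and `−1`, each repeated `g(d−2)/2` times. -/
theorem stmt_14 {V : Type*} [Fintype V] [DecidableEq V] (G : SimpleGraph V)
    [DecidableRel G.Adj] (d g : ℕ) (hd : 3 ≤ d)
    (hreg : G.IsRegularOfDegree d) (hg : Fintype.card V = g)
    (α : Fin g → ℂ)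
    (hα : (G.adjMatrix ℂ).charpoly = ∏ i, (X - C (α i)))
    (R : Matrix G.Dart G.Dart ℂ)
    (hR : ∀ a b : G.Dart, R a b = if b.fst = a.snd ∧ b ≠ a.symm then 1 else 0) :
    (∀ lam : ℂ,
      Matrix.det (lam • (1 : Matrix G.Dart G.Dart ℂ) - R) =
        (lam ^ 2 - 1) ^ ((d - 2) * g / 2) *
          Matrix.det ((lam ^ 2 + (d:ℂ) - 1) • (1 : Matrix V V ℂ) - lam • G.adjMatrix ℂ)) ∧
    R.charpoly.roots =
      Multiset.replicate ((d - 2) * g / 2) (1 : ℂ) +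
      Multiset.replicate ((d - 2) * g / 2) (-1 : ℂ) +
      ∑ i : Fin g, (X ^ 2 - C (α i) * X + C ((d:ℂ) - 1)).roots := by
  obtain rfl : R = G.nonBacktrackingMatrix ℂ := by
    ext a b
    rw [hR]
    rfl
  subst hg
  have hcharpoly := G.charpoly_nonBacktrackingMatrix_of_isRegularOfDegree ℂ hreg (by omega) α hα
  refine ⟨fun lam => ?_, ?_⟩
  · rw [det_smul_one_sub_eq_eval_charpoly, hcharpoly, eval_mul, add_sub_assoc,
      det_sq_add_smul_one_sub_smul_of_charpoly_eq_prod _ α hα]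
    simp
  · have hq : (∏ i, (X ^ 2 - C (α i) * X + C ((d : ℂ) - 1))).Monic :=
      monic_prod_of_monic _ _ fun i _ => by monicity!
    have hsq : (X ^ 2 - 1 : ℂ[X]).Monic := by monicity!
    rw [hcharpoly, roots_mul ((hsq.pow _).mul hq).ne_zero, roots_pow, roots_X_sq_sub_one,
      roots_prod _ _ hq.ne_zero, Multiset.insert_eq_cons, ← Multiset.singleton_add, smul_add,
      Multiset.nsmul_singleton, Multiset.nsmul_singleton]
    rfl
end
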